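/- Suppose H is a nontrivial BSHM(n,ℓ,a,b) with respect to H₁ (so 1 < ℓ < n−1), with the values a and b both attained, and suppose a ≢ b (mod 4). Then either ℓ = 2 and {a,b} = {2,0}, or ℓ = n−2 and {a,b} = {−2,0}. -/

import Mathlib

open Matrix

/-- A Hadamard matrix of order `n`: entries in `{1,-1}` and `Hᵀ * H = n • 1`. -/
def IsHadamard {n : ℕ} (H : Matrix (Fin n) (Fin n) ℤ) : Prop :=
  (∀ i j, H i j = 1 ∨ H i j = -1) ∧ Hᵀ * H = (n : ℤ) • 1

/-- Dot product of columns `j` and `k` of the submatrix of `H` formed by the rows in `R`. -/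
def colDot {n : ℕ} (H : Matrix (Fin n) (Fin n) ℤ) (R : Finset (Fin n)) (j k : Fin n) : ℤ :=
  ∑ i ∈ R, H i j * H i k

/-- `H` is a balanced splittable Hadamard matrix with respect to the submatrix formed by the
rows in `R`, with values `a, b`. -/
def IsBSHM {n : ℕ} (H : Matrix (Fin n) (Fin n) ℤ) (R : Finset (Fin n)) (a b : ℤ) : Prop :=
  _root_.IsHadamard H ∧ ∀ j k : Fin n, j ≠ k → colDot H R j k = a ∨ colDot H R j k = b

/-
Write `s j = ∏ i ∈ R, H i j` for the sign of column `j` of `H₁`. As all entries are `±1`, the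
dot product of columns `j` and `k` of `H₁` is `≡ ℓ - 1 + s j * s k (mod 4)`; so when
`a ≢ b (mod 4)` one value `β` occurs exactly on the pairs of columns with equal signs and the other,
`α`, exactly on the pairs with opposite signs. The Gram matrix `G = H₁ᵀ H₁` is then
`2 G = 2 (ℓ - β) I + (β + α) J + (β - α) s sᵀ`, while the orthogonality of the rows of `H` gives
`G² = n G`. Comparing the entries of `G² = n G` on the diagonal, at two columns of equal sign and at
two columns of opposite sign gives `β ∈ {ℓ, ℓ - n}`, `α = 0`, and finally `ℓ = 2`, `β = 2` or
`ℓ = n - 2`, `β = -2`.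
-/

theorem Finset.prod_eq_one_or_neg_one {ι : Type*} {R : Finset ι} {x : ι → ℤ}
    (hx : ∀ i ∈ R, x i = 1 ∨ x i = -1) : ∏ i ∈ R, x i = 1 ∨ ∏ i ∈ R, x i = -1 := by
  rw [← mul_self_eq_one_iff, ← Finset.prod_mul_distrib]
  exact Finset.prod_eq_one fun i hi => mul_self_eq_one_iff.mpr (hx i hi)

theorem Finset.sum_modEq_card_sub_one_add_prod {ι : Type*} [DecidableEq ι] {R : Finset ι}
    {x : ι → ℤ} (hx : ∀ i ∈ R, x i = 1 ∨ x i = -1) :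
    ∑ i ∈ R, x i ≡ R.card - 1 + ∏ i ∈ R, x i [ZMOD 4] := by
  induction R using Finset.induction_on with
  | empty => simp
  | insert a S ha ih =>
    have hxS : ∀ i ∈ S, x i = 1 ∨ x i = -1 := fun i hi => hx i (Finset.mem_insert_of_mem hi)
    have hS := ih hxS
    rw [Finset.sum_insert ha, Finset.prod_insert ha, Finset.card_insert_of_notMem ha]
    unfold Int.ModEq at hS ⊢
    rcases hx a (Finset.mem_insert_self a S) with h | h <;>
      rcases Finset.prod_eq_one_or_neg_one hxS with hp | hp <;>
      simp only [h, hp, Nat.cast_add, Nat.cast_one] at hS ⊢ <;> omega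

theorem Matrix.mul_transpose_eq_smul_one_of_transpose_mul {ι : Type*} [Fintype ι] [DecidableEq ι]
    {H : Matrix ι ι ℤ} {c : ℤ} (hc : c ≠ 0) (h : Hᵀ * H = c • 1) : H * Hᵀ = c • 1 := by
  set f : ℤ →+* ℚ := Int.castRingHom ℚ
  have hcq : (c : ℚ) ≠ 0 := by exact_mod_cast hc
  have hmap : ∀ A : Matrix ι ι ℤ, A = c • 1 ↔ A.map f = (c : ℚ) • 1 := fun A => by
    have : (c • (1 : Matrix ι ι ℤ)).map f = (c : ℚ) • 1 := by
      ext i j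
      simp only [Matrix.map_apply, Matrix.smul_apply, Matrix.one_apply]
      split_ifs <;> simp [f]
    rw [← (Matrix.map_injective (f := f) Int.cast_injective).eq_iff, this]
  rw [hmap, Matrix.map_mul] at h ⊢
  have hq : Hᵀ.map f * ((c : ℚ)⁻¹ • H.map f) = 1 := by
    rw [Matrix.mul_smul, h, smul_smul, inv_mul_cancel₀ hcq, one_smul]
  have := mul_eq_one_comm.mp hq
  rwa [Matrix.smul_mul, inv_smul_eq_iff₀ hcq, Matrix.transpose_map] at this

theorem exists_ne_eq_of_eq_one_or_neg_one {ι : Type*} [Fintype ι] {s : ι → ℤ}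
    (hs : ∀ m, s m = 1 ∨ s m = -1) (hcard : 2 < Fintype.card ι) : ∃ j j', j ≠ j' ∧ s j = s j' := by
  obtain ⟨j, j', hne, h⟩ := Fintype.exists_ne_map_eq_of_card_lt (fun m => decide (s m = 1))
    (by simpa using hcard)
  refine ⟨j, j', hne, ?_⟩
  simp only [decide_eq_decide] at h
  rcases hs j with hj | hj <;> rcases hs j' with hj' | hj' <;> simp_all

theorem eq_two_or_eq_neg_two_of_relations {N ℓ α β : ℤ} (hℓ : 1 < ℓ) (hℓN : ℓ + 1 < N)
    (hβ : β = ℓ ∨ β = ℓ - N) (hα : α * (2 * (ℓ - β) + N * β - N) = 0)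
    (hdiag : 2 * (ℓ ^ 2 - β ^ 2) + N * (α ^ 2 + β ^ 2) = 2 * N * ℓ) :
    (ℓ = 2 ∧ β = 2 ∧ α = 0) ∨ (ℓ = N - 2 ∧ β = -2 ∧ α = 0) := by
  have hN : 0 < N := by omega
  rcases hβ with hβ | hβ
  · have hα0 : α = 0 := by
      have h : α * (N * (ℓ - 1)) = 0 := by rw [hβ] at hα; linear_combination hα
      exact (mul_eq_zero.mp h).resolve_right (mul_pos hN (by omega)).ne'
    have hℓ2 : ℓ - 2 = 0 := by
      have h : N * ℓ * (ℓ - 2) = 0 := by rw [hβ, hα0] at hdiag; linear_combination hdiag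
      exact (mul_eq_zero.mp h).resolve_left (mul_pos hN (by omega)).ne'
    exact Or.inl ⟨by omega, by omega, hα0⟩
  · have hα0 : α = 0 := by
      have h : α * (N * (N - ℓ - 1)) = 0 := by rw [hβ] at hα; linear_combination -hα
      exact (mul_eq_zero.mp h).resolve_right (mul_pos hN (by omega)).ne'
    have hβ2 : β + 2 = 0 := by
      have h : N * (-β) * (β + 2) = 0 := by
        rw [hα0, show ℓ = β + N by omega] at hdiag; linear_combination -hdiag
      exact (mul_eq_zero.mp h).resolve_left (mul_pos hN (by omega)).ne'
    exact Or.inr ⟨by omega, by omega, hα0⟩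

section TwoClass

variable {ι : Type*} [DecidableEq ι]

def signPattern {R : Type*} [Mul R] [Add R] (s : ι → R) (c d : R) : Matrix ι ι R :=
  Matrix.of fun j k => c + d * (s j * s k)

theorem smul_one_add_signPattern_mul_self_apply [Fintype ι] {R : Type*} [CommRing R] (s : ι → R)
    (hs : ∀ m, s m * s m = 1) (L c d : R) (j k : ι) :
    ((L • (1 : Matrix ι ι R) + signPattern s c d) * (L • 1 + signPattern s c d)) j k =
      L ^ 2 * (1 : Matrix ι ι R) j k + 2 * L * (c + d * (s j * s k)) +
        Fintype.card ι * (c ^ 2 + d ^ 2 * (s j * s k)) + c * d * (s j + s k) * ∑ m, s m := by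
  have hterm : ∀ m, (L • 1 + signPattern s c d) j m * (L • 1 + signPattern s c d) m k =
      L ^ 2 * ((1 : Matrix ι ι R) j m * (1 : Matrix ι ι R) m k) +
        L * ((1 : Matrix ι ι R) j m * (c + d * (s m * s k))) +
        L * ((1 : Matrix ι ι R) m k * (c + d * (s j * s m))) +
        (c ^ 2 + d ^ 2 * (s j * s k)) + c * d * (s j + s k) * s m := fun m => by
    simp only [signPattern, Matrix.add_apply, Matrix.smul_apply, Matrix.of_apply, smul_eq_mul]
    linear_combination d ^ 2 * s j * s k * hs m
  rw [Matrix.mul_apply]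
  simp only [hterm, Finset.sum_add_distrib, ← Finset.mul_sum, ← Matrix.mul_apply, Matrix.one_mul]
  simp only [Matrix.one_apply, mul_ite, mul_one, mul_zero, ite_mul, one_mul, zero_mul,
    Finset.sum_ite_eq, Finset.sum_ite_eq', Finset.mem_univ, ↓reduceIte, Finset.sum_const,
    Finset.card_univ, nsmul_eq_mul, add_left_inj]
  ring

theorem two_smul_eq_of_two_valued {G : Matrix ι ι ℤ} {s : ι → ℤ} {ℓ α β : ℤ}
    (hs : ∀ m, s m = 1 ∨ s m = -1) (hdiag : ∀ j, G j j = ℓ)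
    (hoff : ∀ j k, j ≠ k → G j k = if s j = s k then β else α) :
    (2 : ℤ) • G = (2 * (ℓ - β)) • 1 + signPattern s (β + α) (β - α) := by
  ext j k
  simp only [signPattern, Matrix.add_apply, Matrix.smul_apply, Matrix.of_apply, smul_eq_mul]
  have hss : s j * s j = 1 := mul_self_eq_one_iff.mpr (hs j)
  rcases eq_or_ne j k with rfl | hjk
  · rw [hdiag, Matrix.one_apply_eq, hss]; ring
  · rw [hoff j k hjk, Matrix.one_apply_ne hjk]
    split_ifs with h
    · rw [← h, hss]; ring
    · have : s j * s k = -1 := by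
        rcases hs j with hj | hj <;> rcases hs k with hk | hk <;> simp_all
      rw [this]; ring

theorem eq_two_or_eq_neg_two_of_mul_self_eq_smul [Fintype ι] (G : Matrix ι ι ℤ) (s : ι → ℤ)
    (ℓ α β : ℤ) (hs : ∀ m, s m = 1 ∨ s m = -1) (hGG : G * G = (Fintype.card ι : ℤ) • G)
    (hdiag : ∀ j, G j j = ℓ) (hoff : ∀ j k, j ≠ k → G j k = if s j = s k then β else α)
    (hℓ : 1 < ℓ) (hℓN : ℓ + 1 < Fintype.card ι) {j₀ k₀ : ι} (hjk₀ : s j₀ ≠ s k₀) :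
    (ℓ = 2 ∧ β = 2 ∧ α = 0) ∨ (ℓ = Fintype.card ι - 2 ∧ β = -2 ∧ α = 0) := by
  set N : ℤ := (Fintype.card ι : ℤ) with hN
  have hss : ∀ m, s m * s m = 1 := fun m => mul_self_eq_one_iff.mpr (hs m)
  have hAA : ((2 * (ℓ - β)) • (1 : Matrix ι ι ℤ) + signPattern s (β + α) (β - α)) *
      ((2 * (ℓ - β)) • 1 + signPattern s (β + α) (β - α)) =
      (2 * N) • ((2 * (ℓ - β)) • 1 + signPattern s (β + α) (β - α)) := by
    rw [← two_smul_eq_of_two_valued hs hdiag hoff, Matrix.smul_mul, Matrix.mul_smul, hGG,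
      smul_smul, smul_smul, smul_smul]
    ring_nf
  have hE := fun j k => congr_fun₂ hAA j k
  simp only [smul_one_add_signPattern_mul_self_apply s hss] at hE
  simp only [Matrix.smul_apply, Matrix.add_apply, signPattern,
    Matrix.of_apply, smul_eq_mul, ← hN] at hE
  obtain ⟨j, j', hne, hjj'⟩ := exists_ne_eq_of_eq_one_or_neg_one hs (by omega)
  have hk₀ : s k₀ = - s j₀ := by
    rcases hs j₀ with h | h <;> rcases hs k₀ with h' | h' <;> simp_all
  refine eq_two_or_eq_neg_two_of_relations hℓ hℓN ?_ ?_ ?_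
  · have h1 := hE j j
    have h2 := hE j j'
    rw [Matrix.one_apply_eq, hss] at h1
    rw [Matrix.one_apply_ne hne, ← hjj', hss] at h2
    have : (ℓ - β) * (ℓ - β - N) = 0 := by linarith
    rcases mul_eq_zero.mp this with h | h
    · exact Or.inl (by linarith)
    · exact Or.inr (by linarith)
  · have h := hE j₀ k₀
    rw [Matrix.one_apply_ne (fun h => hjk₀ (congrArg s h)), hk₀, mul_neg, hss, add_neg_cancel] at h
    linarith
  · -- the `∑ m, s m` terms of two diagonal entries of opposite signs cancel
    have h1 := hE j₀ j₀
    have h2 := hE k₀ k₀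
    rw [Matrix.one_apply_eq, hss] at h1 h2
    rw [hk₀] at h2
    linarith

end TwoClass

def rowBlock {n : ℕ} (H : Matrix (Fin n) (Fin n) ℤ) (R : Finset (Fin n)) : Matrix R (Fin n) ℤ :=
  H.submatrix (↑) id

def colGram {n : ℕ} (H : Matrix (Fin n) (Fin n) ℤ) (R : Finset (Fin n)) :
    Matrix (Fin n) (Fin n) ℤ :=
  (rowBlock H R)ᵀ * rowBlock H R

theorem colGram_apply {n : ℕ} (H : Matrix (Fin n) (Fin n) ℤ) (R : Finset (Fin n)) (j k : Fin n) :
    colGram H R j k = colDot H R j k :=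
  Finset.sum_coe_sort R fun i => H i j * H i k

theorem colGram_mul_self {n : ℕ} {H : Matrix (Fin n) (Fin n) ℤ} {c : ℤ} (h : H * Hᵀ = c • 1)
    (R : Finset (Fin n)) : colGram H R * colGram H R = c • colGram H R := by
  have h₁ : rowBlock H R * (rowBlock H R)ᵀ = c • 1 := by
    rw [rowBlock, Matrix.transpose_submatrix,
      ← Matrix.submatrix_mul _ _ _ _ _ Function.bijective_id, h]
    ext i j
    simp only [Matrix.submatrix_apply, Matrix.smul_apply, Matrix.one_apply, Subtype.val_inj]
  rw [colGram, Matrix.mul_assoc, ← Matrix.mul_assoc (rowBlock H R), h₁, Matrix.smul_mul,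
    Matrix.one_mul, Matrix.mul_smul]

def colSign {n : ℕ} (H : Matrix (Fin n) (Fin n) ℤ) (R : Finset (Fin n)) (j : Fin n) : ℤ :=
  ∏ i ∈ R, H i j

section Hadamard

variable {n : ℕ} {H : Matrix (Fin n) (Fin n) ℤ} (R : Finset (Fin n))

theorem colSign_eq_one_or_neg_one (hH : ∀ i j, H i j = 1 ∨ H i j = -1) (j : Fin n) :
    colSign H R j = 1 ∨ colSign H R j = -1 :=
  Finset.prod_eq_one_or_neg_one fun i _ => hH i j

theorem colDot_self (hH : ∀ i j, H i j = 1 ∨ H i j = -1) (j : Fin n) :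
    colDot H R j j = R.card := by
  rw [colDot, Finset.sum_congr rfl fun i _ => mul_self_eq_one_iff.mpr (hH i j)]
  simp

theorem colDot_modEq (hH : ∀ i j, H i j = 1 ∨ H i j = -1) (j k : Fin n) :
    colDot H R j k ≡ R.card - 1 + colSign H R j * colSign H R k [ZMOD 4] := by
  rw [colDot, colSign, colSign, ← Finset.prod_mul_distrib]
  refine Finset.sum_modEq_card_sub_one_add_prod fun i _ => ?_
  rcases hH i j with h | h <;> rcases hH i k with h' | h' <;> simp [h, h']

theorem colDot_modEq_of_colSign_eq (hH : ∀ i j, H i j = 1 ∨ H i j = -1) {j k : Fin n}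
    (h : colSign H R j = colSign H R k) : colDot H R j k ≡ R.card [ZMOD 4] := by
  have := colDot_modEq R hH j k
  rwa [← h, mul_self_eq_one_iff.mpr (colSign_eq_one_or_neg_one R hH j), sub_add_cancel] at this

theorem colDot_modEq_of_colSign_ne (hH : ∀ i j, H i j = 1 ∨ H i j = -1) {j k : Fin n}
    (h : colSign H R j ≠ colSign H R k) : colDot H R j k ≡ R.card + 2 [ZMOD 4] := by
  have := colDot_modEq R hH j k
  unfold Int.ModEq at this ⊢
  rcases colSign_eq_one_or_neg_one R hH j with hj | hj <;>
    rcases colSign_eq_one_or_neg_one R hH k with hk | hk <;> simp only [hj, hk] at h this <;>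
    omega

theorem colDot_eq_ite {a b : ℤ} (hH : ∀ i j, H i j = 1 ∨ H i j = -1)
    (hdots : ∀ j k, j ≠ k → colDot H R j k = a ∨ colDot H R j k = b)
    (ha : a ≡ R.card [ZMOD 4]) (hb : b ≡ R.card + 2 [ZMOD 4]) {j k : Fin n} (hjk : j ≠ k) :
    colDot H R j k = if colSign H R j = colSign H R k then a else b := by
  have hab : ¬ a ≡ b [ZMOD 4] := by unfold Int.ModEq at ha hb ⊢; omega
  split_ifs with h
  · refine (hdots j k hjk).resolve_right fun hb' => hab ?_
    exact ha.trans (hb' ▸ colDot_modEq_of_colSign_eq R hH h).symm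
  · refine (hdots j k hjk).resolve_left fun ha' => hab ?_
    exact (ha' ▸ colDot_modEq_of_colSign_ne R hH h).trans hb.symm

theorem IsHadamard.mul_transpose_eq_smul_one (hH : _root_.IsHadamard H) : H * Hᵀ = (n : ℤ) • 1 := by
  rcases Nat.eq_zero_or_pos n with rfl | hn
  · ext i; exact i.elim0
  · exact Matrix.mul_transpose_eq_smul_one_of_transpose_mul (by omega) hH.2

theorem IsHadamard.bshm_values_of_colSign_eq (hH : _root_.IsHadamard H) {a b : ℤ}
    (hdots : ∀ j k, j ≠ k → colDot H R j k = a ∨ colDot H R j k = b)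
    (h1 : 1 < R.card) (h2 : R.card < n - 1) (hmod : ¬ a ≡ b [ZMOD 4]) {ja ka jb kb : Fin n}
    (hsa : colSign H R ja = colSign H R ka) (hda : colDot H R ja ka = a)
    (hdb : colDot H R jb kb = b) :
    (R.card = 2 ∧ ({a, b} : Set ℤ) = {2, 0}) ∨ (R.card = n - 2 ∧ ({a, b} : Set ℤ) = {-2, 0}) := by
  have ha : a ≡ R.card [ZMOD 4] := hda ▸ colDot_modEq_of_colSign_eq R hH.1 hsa
  have hsb : colSign H R jb ≠ colSign H R kb := fun hsb =>
    hmod (ha.trans (hdb ▸ colDot_modEq_of_colSign_eq R hH.1 hsb).symm)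
  have hb : b ≡ R.card + 2 [ZMOD 4] := hdb ▸ colDot_modEq_of_colSign_ne R hH.1 hsb
  rcases eq_two_or_eq_neg_two_of_mul_self_eq_smul (colGram H R) (colSign H R) R.card b a
      (colSign_eq_one_or_neg_one R hH.1)
      (by rw [Fintype.card_fin]; exact colGram_mul_self hH.mul_transpose_eq_smul_one R)
      (fun j => by rw [colGram_apply, colDot_self R hH.1])
      (fun j k hjk => by rw [colGram_apply, colDot_eq_ite R hH.1 hdots ha hb hjk])
      (by omega) (by simp only [Fintype.card_fin]; omega) hsb with
    ⟨hℓ, rfl, rfl⟩ | ⟨hℓ, rfl, rfl⟩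
  · exact Or.inl ⟨by omega, rfl⟩
  · simp only [Fintype.card_fin] at hℓ
    exact Or.inr ⟨by omega, rfl⟩

end Hadamard

theorem stmt10 {n ℓ : ℕ} (a b : ℤ) (H : Matrix (Fin n) (Fin n) ℤ)
    (R : Finset (Fin n)) (hRcard : R.card = ℓ) (h1 : 1 < ℓ) (h2 : ℓ < n - 1)
    (hbshm : IsBSHM H R a b)
    (haAtt : ∃ j k, j ≠ k ∧ colDot H R j k = a)
    (hbAtt : ∃ j k, j ≠ k ∧ colDot H R j k = b)
    (hmod : ¬ Int.ModEq 4 a b) :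
    (ℓ = 2 ∧ ({a, b} : Set ℤ) = {2, 0}) ∨
    (ℓ = n - 2 ∧ ({a, b} : Set ℤ) = {-2, 0}) := by
  subst hRcard
  obtain ⟨hH, hdots⟩ := hbshm
  obtain ⟨ja, ka, -, hda⟩ := haAtt
  obtain ⟨jb, kb, -, hdb⟩ := hbAtt
  by_cases hsa : colSign H R ja = colSign H R ka
  · exact hH.bshm_values_of_colSign_eq R hdots h1 h2 hmod hsa hda hdb
  · have hsb : colSign H R jb = colSign H R kb := by
      by_contra hsb
      exact hmod ((hda ▸ colDot_modEq_of_colSign_ne R hH.1 hsa).trans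
        (hdb ▸ colDot_modEq_of_colSign_ne R hH.1 hsb).symm)
    rw [Set.pair_comm a b]
    exact hH.bshm_values_of_colSign_eq R (fun j k hjk => (hdots j k hjk).symm) h1 h2
      (fun h => hmod h.symm) hsb hdb hda
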